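/- Let κ be a cardinal and X ⊆ 2^κ the set of all functions with countable support {α : x(α) = 1}, with the subspace topology. Then X is a countably compact topological group under coordinatewise addition mod 2, X has countable tightness, X is homogeneous, and |X| = κ^ω. Hence countable tightness together with countable compactness and homogeneity does not bound cardinality by the continuum. -/

import Mathlib

open Set Cardinal TopologicalSpace

universe u

/-- `Y` is countably compact: every countable open cover has a finite subcover. -/
def CountablyCompact (Y : Type u) [TopologicalSpace Y] : Prop :=
  ∀ 𝒰 : Set (Set Y), 𝒰.Countable → (∀ u ∈ 𝒰, IsOpen u) → ⋃₀ 𝒰 = Set.univ →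
    ∃ 𝒱 ⊆ 𝒰, 𝒱.Finite ∧ ⋃₀ 𝒱 = Set.univ

/-- The tightness of `Y` is at most `κ`. -/
def TightnessLE (Y : Type u) [TopologicalSpace Y] (κ : Cardinal.{u}) : Prop :=
  ∀ (A : Set Y) (x : Y), x ∈ closure A → ∃ B ⊆ A, #B ≤ κ ∧ x ∈ closure B

/-! Every countable subset of the σ-product lies in a compact face `{x | support x ⊆ S}` with
`S ⊆ ι` countable, which gives countable compactness. For tightness at `x ∈ closure A`, choose for
every finite `F ⊆ ι` a point `a F ∈ A` agreeing with `x` on `F`, and close the support of `x` off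
to a countable `T` containing the supports of all `a F` with `F ⊆ T`. Since `x` and these `a F`
vanish off `T`, the countably many `a F` with `F ⊆ T` already accumulate at `x`. Homogeneity is
translation in the group, and the support map identifies the σ-product with the countable subsets
of `ι`, of which there are `κ ^ ℵ₀`. -/

open Function

section

variable {ι Y : Type*}

theorem countablyCompact_of_forall_countable_subset_isCompact [TopologicalSpace Y]
    (h : ∀ C : Set Y, C.Countable → ∃ K, IsCompact K ∧ C ⊆ K) : CountablyCompact Y := by
  intro 𝒰 h𝒰 hopen hcover
  by_contra! hno
  have hmiss : ∀ 𝒱 ∈ {𝒱 | Set.Finite 𝒱 ∧ 𝒱 ⊆ 𝒰}, ∃ y, y ∉ ⋃₀ 𝒱 :=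
    fun 𝒱 h𝒱 => (ne_univ_iff_exists_notMem _).1 (hno 𝒱 h𝒱.2 h𝒱.1)
  have : Nonempty Y := (hmiss ∅ ⟨finite_empty, empty_subset _⟩).nonempty
  choose! p hp using hmiss
  obtain ⟨K, hK, hpK⟩ := h _ ((countable_ofPred_finite_subset h𝒰).image p)
  obtain ⟨𝒱, h𝒱𝒰, h𝒱, hK𝒱⟩ := hK.elim_finite_subcover_image (c := id) hopen
    (by simp [← sUnion_eq_biUnion, hcover])
  exact hp 𝒱 ⟨h𝒱, h𝒱𝒰⟩ (by simpa [← sUnion_eq_biUnion] using hK𝒱 (hpK ⟨𝒱, ⟨h𝒱, h𝒱𝒰⟩, rfl⟩))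

theorem Set.Countable.setOf_finset_subset {s : Set ι} (hs : s.Countable) :
    {F : Finset ι | ↑F ⊆ s}.Countable :=
  ((countable_ofPred_finite_subset hs).preimage Finset.coe_injective).mono <| by
    intro F hF; exact ⟨F.finite_toSet, hF⟩

theorem Set.Countable.exists_superset_closed_under {S : Set ι} (hS : S.Countable)
    (f : Finset ι → Set ι) (hf : ∀ F, (f F).Countable) :
    ∃ T, S ⊆ T ∧ T.Countable ∧ ∀ F : Finset ι, ↑F ⊆ T → f F ⊆ T := by
  let step : Set ι → Set ι := fun t => t ∪ ⋃ F ∈ {F : Finset ι | ↑F ⊆ t}, f F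
  have hstep : ∀ {t}, t.Countable → (step t).Countable :=
    fun ht => ht.union (ht.setOf_finset_subset.biUnion fun F _ => hf F)
  have hmono : Monotone fun n => step^[n] S := monotone_nat_of_le_succ fun n => by
    rw [iterate_succ_apply']; exact subset_union_left
  refine ⟨⋃ n, step^[n] S, subset_iUnion_of_subset 0 subset_rfl,
    countable_iUnion fun n => ?_, fun F hF => ?_⟩
  · induction n with
    | zero => exact hS
    | succ n ih => rw [iterate_succ_apply']; exact hstep ih
  · obtain ⟨n, hn⟩ := hmono.directed_le.exists_mem_subset_of_finset_subset_biUnion hF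
    refine subset_iUnion_of_subset (n + 1) ?_
    rw [iterate_succ_apply']
    exact subset_union_of_subset_right (subset_biUnion_of_mem (u := f) hn) _

theorem mem_closure_iff_forall_finset_eqOn [TopologicalSpace Y] [DiscreteTopology Y]
    {A : Set (ι → Y)} {x : ι → Y} : x ∈ closure A ↔ ∀ F : Finset ι, ∃ a ∈ A, EqOn a x F := by
  refine ⟨fun hx F => ?_, fun h => mem_closure_iff.2 fun o ho hxo => ?_⟩
  · obtain ⟨a, ha, haA⟩ := mem_closure_iff.1 hx ((F : Set ι).pi fun i => {x i})
      (isOpen_set_pi F.finite_toSet fun _ _ => isOpen_discrete _) fun _ _ => rfl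
    exact ⟨a, haA, ha⟩
  · obtain ⟨F, u, hu, hFo⟩ := isOpen_pi_iff.1 ho x hxo
    obtain ⟨a, haA, hax⟩ := h F
    exact ⟨a, hFo fun i hi => hax hi ▸ (hu i hi).2, haA⟩

theorem isCompact_setOf_support_subset [Zero Y] [TopologicalSpace Y] [CompactSpace Y]
    (S : Set ι) : IsCompact {x : ι → Y | support x ⊆ S} := by
  classical
  have hpi : {x : ι → Y | support x ⊆ S} = univ.pi fun i => if i ∈ S then univ else {0} := by
    ext x
    simp only [mem_ofPred_eq, support_subset_iff', mem_univ_pi]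
    refine forall_congr' fun i => ?_
    split_ifs with hi <;> simp [hi]
  rw [hpi]
  exact isCompact_univ_pi fun i => by split_ifs; exacts [isCompact_univ, isCompact_singleton]

theorem exists_homeomorph_apply_eq {G : Type*} [TopologicalSpace G] [AddGroup G]
    [SeparatelyContinuousAdd G] (x y : G) : ∃ e : G ≃ₜ G, e x = y :=
  ⟨Homeomorph.addLeft (y - x), sub_add_cancel y x⟩

variable (ι Y) in
def countableSupportSet [Zero Y] : Set (ι → Y) := {x | (support x).Countable}

variable (ι Y) in
def countableSupportAddSubgroup [AddGroup Y] : AddSubgroup (ι → Y) where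
  carrier := countableSupportSet ι Y
  zero_mem' := by simp [countableSupportSet]
  add_mem' ha hb := (ha.union hb).mono (support_add _ _)
  neg_mem' {x} hx := show (support (-x)).Countable by rwa [support_neg]

theorem countablyCompact_countableSupportSet [Zero Y] [TopologicalSpace Y] [CompactSpace Y] :
    CountablyCompact (countableSupportSet ι Y) := by
  refine countablyCompact_of_forall_countable_subset_isCompact fun C hC => ?_
  let S := ⋃ x ∈ C, support (x : ι → Y)
  have hS : S.Countable := hC.biUnion fun x _ => x.2
  refine ⟨Subtype.val ⁻¹' {x | support x ⊆ S}, ?_, fun x hx =>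
    subset_biUnion_of_mem (u := fun x : countableSupportSet ι Y => support x.1) hx⟩
  have hKX : {x : ι → Y | support x ⊆ S} ⊆ countableSupportSet ι Y := fun x hx => hS.mono hx
  rw [Subtype.isCompact_iff, Subtype.image_preimage_coe, inter_eq_right.2 hKX]
  exact isCompact_setOf_support_subset S

theorem tightnessLE_countableSupportSet [Zero Y] [TopologicalSpace Y] [DiscreteTopology Y] :
    TightnessLE (countableSupportSet ι Y) ℵ₀ := by
  classical
  intro A x hx
  have hA : ∀ F : Finset ι, ∃ a ∈ A, EqOn (a : ι → Y) x F := fun F => by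
    obtain ⟨_, ⟨a, haA, rfl⟩, hax⟩ := mem_closure_iff_forall_finset_eqOn.1 (closure_subtype.1 hx) F
    exact ⟨a, haA, hax⟩
  choose a haA hax using hA
  obtain ⟨T, hxT, hT, hTa⟩ := x.2.exists_superset_closed_under (fun F => support (a F).1)
    fun F => (a F).2
  refine ⟨a '' {F | ↑F ⊆ T}, image_subset_iff.2 fun F _ => haA F,
    le_aleph0_iff_set_countable.2 (hT.setOf_finset_subset.image a), ?_⟩
  refine closure_subtype.2 (mem_closure_iff_forall_finset_eqOn.2 fun F => ?_)
  let G := F.filter (· ∈ T)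
  have hGT : ↑G ⊆ T := fun i hi => (Finset.mem_filter.1 hi).2
  refine ⟨a G, mem_image_of_mem _ (mem_image_of_mem _ hGT), fun i hi => ?_⟩
  by_cases hiT : i ∈ T
  · exact hax G (Finset.mem_filter.2 ⟨hi, hiT⟩)
  · rw [notMem_support.1 fun h => hiT (hTa G hGT h), notMem_support.1 fun h => hiT (hxT h)]

theorem Cardinal.mk_countable_sets_eq_power_aleph0 (α : Type u) [Infinite α] :
    #{s : Set α // s.Countable} = #α ^ ℵ₀ := by
  have hcount : ∀ s : Set α, s.Countable ↔ #s ≤ ℵ₀ := fun _ => le_aleph0_iff_set_countable.symm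
  refine le_antisymm ?_ ?_
  · rw [mk_congr (Equiv.subtypeEquivRight hcount)]
    exact mk_bounded_set_le_of_infinite α ℵ₀
  obtain ⟨e⟩ : Nonempty (ULift.{u} ℕ × α ≃ α) := Cardinal.eq.1 <| by
    simp [aleph0_mul_eq (aleph0_le_mk α)]
  let graph : (ULift.{u} ℕ → α) → {s : Set α // s.Countable} :=
    fun f => ⟨e '' Set.univ.graphOn f, ((countable_univ.image _).image _)⟩
  have hgraph : Injective graph := fun f g hfg =>
    funext fun n => graphOn_inj.1 (image_injective.2 e.injective (congrArg Subtype.val hfg))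
      (mem_univ n)
  calc #α ^ ℵ₀ = #(ULift.{u} ℕ → α) := by rw [← power_def, mk_uLift, mk_nat, lift_aleph0]
    _ ≤ #{s : Set α // s.Countable} := mk_le_of_injective hgraph

theorem ZMod.indicator_support_one_eq (x : ι → ZMod 2) : (support x).indicator 1 = x := by
  funext i
  by_cases hi : x i = 0
  · simp [hi]
  · simpa [hi] using ((show ∀ a : ZMod 2, a ≠ 0 → a = 1 by decide) _ hi).symm

theorem mk_countableSupportSet_zmod_two [Infinite ι] :
    #(countableSupportSet ι (ZMod 2)) = #ι ^ ℵ₀ := by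
  rw [← Cardinal.mk_countable_sets_eq_power_aleph0]
  refine Cardinal.mk_congr
    { toFun x := ⟨support x.1, x.2⟩
      invFun s := ⟨s.1.indicator 1, s.2.mono support_indicator_subset⟩
      left_inv x := Subtype.ext (ZMod.indicator_support_one_eq x.1)
      right_inv s := Subtype.ext (by simp) }

end

/-- For an infinite cardinal `κ`, the σ-product `X ⊆ 2^κ` of all functions with countable
support (where `2 = ℤ/2ℤ` is discrete) is a countably compact topological group under
coordinatewise addition mod 2, has countable tightness, is homogeneous, and has cardinality
`κ^ω`. Hence countable tightness, countable compactness and homogeneity together do not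
bound the cardinality by the continuum. -/
theorem sigma_product_countably_compact_homogeneous_group
    (κ : Cardinal.{u}) (hκ : ℵ₀ ≤ κ)
    (ι : Type u) (hι : #ι = κ) :
    letI : TopologicalSpace (ZMod 2) := ⊥
    ∀ X : Set (ι → ZMod 2), X = {x | {i | x i ≠ 0}.Countable} →
      (∃ S : AddSubgroup (ι → ZMod 2), ↑S = X ∧ IsTopologicalAddGroup ↥S) ∧
      CountablyCompact ↥X ∧
      TightnessLE ↥X ℵ₀ ∧
      (∀ x y : ↥X, ∃ e : ↥X ≃ₜ ↥X, e x = y) ∧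
      #↥X = κ ^ (ℵ₀ : Cardinal.{u}) := by
  let : TopologicalSpace (ZMod 2) := ⊥
  have : DiscreteTopology (ZMod 2) := ⟨rfl⟩
  intro X hX
  obtain rfl : X = countableSupportSet ι (ZMod 2) := hX
  have : Infinite ι := Cardinal.infinite_iff.2 (hι ▸ hκ)
  exact ⟨⟨countableSupportAddSubgroup ι (ZMod 2), rfl, inferInstance⟩,
    countablyCompact_countableSupportSet, tightnessLE_countableSupportSet,
    exists_homeomorph_apply_eq (G := countableSupportAddSubgroup ι (ZMod 2)),
    hι ▸ mk_countableSupportSet_zmod_two⟩
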